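/- Let s₀ < s₁ < ⋯ < s_k be integers, I_m = [0, 2^{s_m}], and define I*_k = I_k and I*_{m−1} = ⟨I_{m−1}, I*_m⟩ for m = k, k−1, …, 1. Then |J ∩ I*_0|/|J| = 1/2^m for every m ∈ {1,…,k} and every dyadic interval J (i.e. an interval of the form [j·2^p, (j+1)·2^p] with j, p ∈ ℤ) contained in I*_m whose length belongs to (2^{s_{m−1}}, 2^{s_m}]; in particular |I*_m ∩ I*_0|/|I*_m| = 1/2^m for every m ∈ {1,…,k}. -/
import Mathlib


open MeasureTheory Set
open scoped ENNReal

noncomputable section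

/-- The set of left endpoints of the component intervals of `I*_{k-i}`, where the sets
`I*_m` are obtained from `I*_k = [0, 2^{s_k}]` by repeatedly applying the operation
`⟨·,·⟩`: at each step, each component interval `[a, a + 2^{s_{m}}]` is replaced by the union
of its odd-indexed (1-based) subintervals `[a + 2t·2^{s_{m-1}}, a + (2t+1)·2^{s_{m-1}}]`,
`0 ≤ t < 2^{s_m - s_{m-1} - 1}`, of length `2^{s_{m-1}}`. -/
def leftEnds (s : ℕ → ℤ) (k : ℕ) : ℕ → Set ℝ
  | 0 => {0}
  | i + 1 =>
      ⋃ a ∈ leftEnds s k i,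
        (fun t : ℕ => a + 2 * t * (2:ℝ) ^ s (k - i - 1)) ''
          {t : ℕ | t < 2 ^ (s (k - i) - s (k - i - 1) - 1).toNat}

/-- The set `I*_m` of Lemma 2: `I*_k = I_k = [0, 2^{s_k}]` and
`I*_{m-1} = ⟨I_{m-1}, I*_m⟩` for `m = k, k-1, …, 1`. -/
def Istar (s : ℕ → ℤ) (k m : ℕ) : Set ℝ :=
  ⋃ a ∈ leftEnds s k (k - m), Set.Icc a (a + (2:ℝ) ^ s m)

lemma two_zpow_split (f e : ℤ) (h : f ≤ e) :
    (2:ℝ) ^ e = (2:ℝ) ^ ((e - f).toNat) * (2:ℝ) ^ f := by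
  rw [← zpow_natCast (2:ℝ) (e - f).toNat, Int.toNat_of_nonneg (by omega),
    ← zpow_add₀ (two_ne_zero)]
  congr 1; omega

lemma two_zpow_pos (e : ℤ) : (0:ℝ) < 2 ^ e := zpow_pos (by norm_num) e

lemma Icc_disj {a b c d : ℝ} (h : b < c) : Disjoint (Set.Icc a b) (Set.Icc c d) :=
  Set.disjoint_left.mpr fun x hx hx2 => absurd (hx.2.trans_lt h) (not_lt.mpr hx2.1)

lemma leftEnds_finite (s : ℕ → ℤ) (k : ℕ) : ∀ i, (leftEnds s k i).Finite := by
  intro i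
  induction i with
  | zero => simpa [leftEnds] using Set.finite_singleton _
  | succ i ih =>
      rw [leftEnds]
      exact ih.biUnion fun a _ => (Set.finite_lt_nat _).image _

lemma Istar_measurable (s : ℕ → ℤ) (k m : ℕ) : MeasurableSet (Istar s k m) :=
  (leftEnds_finite s k _).measurableSet_biUnion fun a _ => measurableSet_Icc

-- step characterization
lemma leftEnds_succ (s : ℕ → ℤ) (k m : ℕ) (h : m + 1 ≤ k) :
    leftEnds s k (k - m) =
      ⋃ a ∈ leftEnds s k (k - (m+1)),
        (fun t : ℕ => a + 2 * t * (2:ℝ) ^ s m) ''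
          {t : ℕ | t < 2 ^ (s (m+1) - s m - 1).toNat} := by
  have h0 : k - m = (k - (m+1)) + 1 := by omega
  rw [h0, leftEnds]
  have h1 : k - (k - (m+1)) - 1 = m := by omega
  have h2 : k - (k - (m+1)) = m + 1 := by omega
  rw [h1, h2]

section
variable (s : ℕ → ℤ) (k : ℕ) (hs : ∀ m, m < k → s m < s (m + 1))

include hs in
lemma smono : ∀ a b : ℕ, a ≤ b → b ≤ k → s a ≤ s b := by
  intro a b hab hbk
  induction b with
  | zero => simp_all
  | succ b ih =>
      rcases Nat.eq_or_lt_of_le hab with rfl | hlt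
      · exact le_refl _
      · exact le_trans (ih (by omega) (by omega)) (le_of_lt (hs b (by omega)))

include hs in
lemma leftEnds_mult : ∀ i, i ≤ k → ∀ a ∈ leftEnds s k i,
    ∃ n : ℤ, a = (n : ℝ) * 2 ^ (s (k - i) + 1) := by
  intro i
  induction i with
  | zero =>
      intro _ a ha
      simp only [leftEnds, Set.mem_singleton_iff] at ha
      exact ⟨0, by simp [ha]⟩
  | succ i ih =>
      intro hik a ha
      rw [leftEnds] at ha
      simp only [Set.mem_iUnion, Set.mem_image, Set.mem_setOf_eq] at ha
      obtain ⟨b, hb, t, _, rfl⟩ := ha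
      obtain ⟨n, rfl⟩ := ih (by omega) b hb
      have hle : s (k - i - 1) ≤ s (k - i) := by
        have : k - i - 1 + 1 = k - i := by omega
        calc s (k - i - 1) ≤ s (k - i - 1 + 1) := le_of_lt (hs _ (by omega))
        _ = s (k - i) := by rw [this]
      have hsplit := two_zpow_split (s (k - i - 1) + 1) (s (k - i) + 1) (by omega)
      refine ⟨n * 2 ^ (s (k - i) + 1 - (s (k - i - 1) + 1)).toNat + t, ?_⟩
      have h1 : k - (i + 1) = k - i - 1 := by omega
      rw [h1]
      push_cast
      rw [hsplit]
      have h2 : (2:ℝ) ^ (s (k - i - 1) + 1) = 2 * 2 ^ s (k - i - 1) := by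
        rw [zpow_add₀ (two_ne_zero : (2:ℝ) ≠ 0)]; ring
      rw [h2]; push_cast; ring

include hs in
lemma comp_disjoint {i : ℕ} (hik : i ≤ k) {a a' : ℝ}
    (ha : a ∈ leftEnds s k i) (ha' : a' ∈ leftEnds s k i) (hne : a ≠ a') :
    Disjoint (Set.Icc a (a + (2:ℝ) ^ s (k - i))) (Set.Icc a' (a' + (2:ℝ) ^ s (k - i))) := by
  obtain ⟨n, rfl⟩ := leftEnds_mult s k hs i hik a ha
  obtain ⟨n', rfl⟩ := leftEnds_mult s k hs i hik a' ha'
  have hnn : n ≠ n' := fun h => hne (by rw [h])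
  have hP : (0:ℝ) < 2 ^ (s (k - i) + 1) := two_zpow_pos _
  have h2 : (2:ℝ) ^ (s (k - i) + 1) = 2 * 2 ^ s (k - i) := by
    rw [zpow_add₀ (two_ne_zero : (2:ℝ) ≠ 0)]; ring
  rcases lt_or_gt_of_ne hnn with h | h
  · apply Icc_disj
    have hc : (n : ℝ) + 1 ≤ n' := by exact_mod_cast h
    have := mul_le_mul_of_nonneg_right hc (le_of_lt hP)
    nlinarith [two_zpow_pos (s (k - i))]
  · apply (Icc_disj _).symm
    have hc : (n' : ℝ) + 1 ≤ n := by exact_mod_cast h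
    have := mul_le_mul_of_nonneg_right hc (le_of_lt hP)
    nlinarith [two_zpow_pos (s (k - i))]

include hs in
lemma sub_comp {m : ℕ} (hm : m + 1 ≤ k) {a : ℝ} (ha : a ∈ leftEnds s k (k - (m+1)))
    {t : ℕ} (ht : t < 2 ^ (s (m+1) - s m - 1).toNat) :
    a + 2 * t * (2:ℝ) ^ s m ∈ leftEnds s k (k - m) ∧
    Set.Icc (a + 2 * t * (2:ℝ) ^ s m) (a + 2 * t * (2:ℝ) ^ s m + (2:ℝ) ^ s m)
      ⊆ Set.Icc a (a + (2:ℝ) ^ s (m+1)) := by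
  constructor
  · rw [leftEnds_succ s k m hm]
    exact Set.mem_biUnion ha ⟨t, ht, rfl⟩
  · have hlt : s m < s (m+1) := hs m (by omega)
    have hsplit : (2:ℝ) ^ s (m+1) = 2 ^ (s (m+1) - s m - 1).toNat * 2 ^ (s m + 1) := by
      have := two_zpow_split (s m + 1) (s (m+1)) (by omega)
      rwa [show s (m+1) - (s m + 1) = s (m+1) - s m - 1 by ring] at this
    have h2 : (2:ℝ) ^ (s m + 1) = 2 * 2 ^ s m := by
      rw [zpow_add₀ (two_ne_zero : (2:ℝ) ≠ 0)]; ring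
    have hc : (t:ℝ) + 1 ≤ 2 ^ (s (m+1) - s m - 1).toNat := by exact_mod_cast Nat.succ_le_of_lt ht
    apply Set.Icc_subset_Icc
    · nlinarith [two_zpow_pos (s m), (Nat.cast_nonneg t : (0:ℝ) ≤ t)]
    · rw [hsplit, h2]
      nlinarith [two_zpow_pos (s m)]

include hs in
lemma Istar_mono_succ {m : ℕ} (hm : m + 1 ≤ k) : Istar s k m ⊆ Istar s k (m+1) := by
  intro x hx
  rw [Istar] at hx
  simp only [Set.mem_iUnion] at hx
  obtain ⟨b, hb, hxb⟩ := hx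
  rw [leftEnds_succ s k m hm] at hb
  simp only [Set.mem_iUnion, Set.mem_image, Set.mem_setOf_eq] at hb
  obtain ⟨a, ha, t, ht, rfl⟩ := hb
  exact Set.mem_biUnion ha ((sub_comp s k hs hm ha ht).2 hxb)

include hs in
lemma Istar_zero_subset {m : ℕ} (hm : m ≤ k) : Istar s k 0 ⊆ Istar s k m := by
  induction m with
  | zero => exact subset_rfl
  | succ m ih => exact (ih (by omega)).trans (Istar_mono_succ s k hs hm)

include hs in
lemma main_vol : ∀ m, m ≤ k → ∀ p j : ℤ,
    Set.Icc ((j:ℝ) * (2:ℝ) ^ p) (((j:ℝ) + 1) * (2:ℝ) ^ p) ⊆ Istar s k m →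
    p ≤ s m → (1 ≤ m → s (m - 1) < p) →
    volume (Set.Icc ((j:ℝ) * (2:ℝ) ^ p) (((j:ℝ) + 1) * (2:ℝ) ^ p) ∩ Istar s k 0)
      = ENNReal.ofReal ((2:ℝ) ^ p) / 2 ^ m := by
  intro m
  induction m with
  | zero =>
      intro _ p j hJ _ _
      rw [Set.inter_eq_self_of_subset_left hJ, Real.volume_Icc, pow_zero, div_one]
      congr 1; ring
  | succ m ih =>
      intro hm p j hJ hple h1le
      have hp : s m < p := by simpa using h1le (by omega)
      have hsm1 : s m < s (m+1) := hs m (by omega)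
      set x : ℝ := (j:ℝ) * 2 ^ p with hxdef
      have hpp : (0:ℝ) < 2 ^ p := two_zpow_pos p
      have hxJ : x ∈ Set.Icc ((j:ℝ) * 2 ^ p) (((j:ℝ) + 1) * 2 ^ p) :=
        ⟨le_refl _, by nlinarith⟩
      have hmem : x ∈ Istar s k (m+1) := hJ hxJ
      rw [Istar] at hmem
      simp only [Set.mem_iUnion] at hmem
      obtain ⟨a, ha, hxa⟩ := hmem
      obtain ⟨n, han⟩ := by
        have := leftEnds_mult s k hs (k - (m+1)) (by omega) a ha
        rwa [show k - (k - (m+1)) = m + 1 by omega] at this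
      -- a as multiple of 2^p
      set w : ℤ := n * 2 ^ (s (m+1) + 1 - p).toNat with hwdef
      have haw : a = (w:ℝ) * 2 ^ p := by
        rw [hwdef, han, two_zpow_split p (s (m+1) + 1) (by omega)]
        push_cast; ring
      set Wn : ℕ := 2 ^ (s (m+1) - p).toNat with hWdef
      have hW : (2:ℝ) ^ s (m+1) = (Wn:ℝ) * 2 ^ p := by
        rw [hWdef, two_zpow_split p (s (m+1)) hple]; push_cast; ring
      have hwj : w ≤ j := by
        have h1 : (w:ℝ) * 2 ^ p ≤ (j:ℝ) * 2 ^ p := haw ▸ hxa.1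
        exact_mod_cast le_of_mul_le_mul_right h1 hpp
      have hjW : j ≤ w + Wn := by
        have h1 : (j:ℝ) * 2 ^ p ≤ ((w:ℝ) + Wn) * 2 ^ p := by
          have := hxa.2; rw [haw, hW] at this; nlinarith
        exact_mod_cast le_of_mul_le_mul_right h1 hpp
      have hsm2 : (2:ℝ) ^ (s (m+1) + 1) = 2 * 2 ^ s (m+1) := by
        rw [zpow_add₀ (two_ne_zero : (2:ℝ) ≠ 0)]; ring
      have hp2 : (2:ℝ) ^ p ≤ 2 ^ s (m+1) := (zpow_le_zpow_iff_right₀ one_lt_two).mpr hple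
      -- J is contained in the component of a
      have hjW1 : j + 1 ≤ w + Wn := by
        by_contra hcon
        have hje : j = w + Wn := by omega
        have hxe : x = a + 2 ^ s (m+1) := by
          rw [hxdef, haw, hW, hje]; push_cast; ring
        set y : ℝ := x + 2 ^ p / 2 with hydef
        have hyJ : y ∈ Set.Icc ((j:ℝ) * 2 ^ p) (((j:ℝ) + 1) * 2 ^ p) :=
          ⟨by rw [hydef]; nlinarith, by rw [hydef]; nlinarith⟩
        have hyI := hJ hyJ
        rw [Istar] at hyI
        simp only [Set.mem_iUnion] at hyI
        obtain ⟨a', ha', hya'⟩ := hyI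
        obtain ⟨n', han'⟩ := by
          have := leftEnds_mult s k hs (k - (m+1)) (by omega) a' ha'
          rwa [show k - (k - (m+1)) = m + 1 by omega] at this
        have hPpos : (0:ℝ) < 2 ^ (s (m+1) + 1) := two_zpow_pos _
        have hgt : a < a' := by
          have := hya'.2
          have hzp : (0:ℝ) < 2 ^ s (m+1) := two_zpow_pos _
          rw [hydef, hxe] at this; nlinarith
        have hnlt : n < n' := by
          have : (n:ℝ) * 2 ^ (s (m+1) + 1) < (n':ℝ) * 2 ^ (s (m+1) + 1) := by
            rw [← han, ← han']; exact hgt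
          exact_mod_cast lt_of_mul_lt_mul_right this (le_of_lt hPpos)
        have hge : a + 2 ^ (s (m+1) + 1) ≤ a' := by
          rw [han, han']
          have : (n:ℝ) + 1 ≤ n' := by exact_mod_cast hnlt
          nlinarith
        have h5 := hya'.1
        rw [hydef, hxe] at h5
        rw [hsm2] at hge
        nlinarith [two_zpow_pos (s (m+1))]
      have hJsub : Set.Icc ((j:ℝ) * 2 ^ p) (((j:ℝ) + 1) * 2 ^ p)
          ⊆ Set.Icc a (a + (2:ℝ) ^ s (m+1)) := by
        apply Set.Icc_subset_Icc
        · rw [haw]; have : (w:ℝ) ≤ j := by exact_mod_cast hwj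
          nlinarith
        · rw [haw, hW]
          have : ((j:ℝ) + 1) ≤ (w:ℝ) + Wn := by exact_mod_cast hjW1
          nlinarith
      -- setup of subinterval combinatorics
      set Dn : ℕ := (p - s m - 1).toNat with hDdef
      set En : ℕ := (s (m+1) - s m - 1).toNat with hEdef
      set u : ℕ := (j - w).toNat with hudef
      have hu : (u:ℤ) = j - w := Int.toNat_of_nonneg (by omega)
      have h2p : (2:ℝ) ^ p = 2 ^ Dn * 2 * 2 ^ s m := by
        rw [hDdef, two_zpow_split (s m + 1) p (by omega),
          (show p - (s m + 1) = p - s m - 1 by ring),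
          zpow_add₀ (two_ne_zero : (2:ℝ) ≠ 0), zpow_one]
        ring
      have hu1 : u + 1 ≤ Wn := by omega
      have htEn : ∀ r : ℕ, r < 2 ^ Dn → u * 2 ^ Dn + r < 2 ^ En := by
        intro r hr
        have h1 : u * 2 ^ Dn + r < (u + 1) * 2 ^ Dn := by
          rw [add_mul, one_mul]; omega
        have h2 : (u + 1) * 2 ^ Dn ≤ Wn * 2 ^ Dn := Nat.mul_le_mul_right _ hu1
        have h3 : Wn * 2 ^ Dn = 2 ^ En := by
          rw [hWdef, hDdef, hEdef, ← pow_add]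
          congr 1
          omega
        omega
      set K : ℕ → Set ℝ := fun r =>
        Set.Icc (x + 2 * r * (2:ℝ) ^ s m) (x + 2 * r * (2:ℝ) ^ s m + 2 ^ s m) with hKdef
      have hu' : (u:ℝ) = (j:ℝ) - (w:ℝ) := by exact_mod_cast hu
      have hend : ∀ r : ℕ, x + 2 * r * (2:ℝ) ^ s m
          = a + 2 * ((u * 2 ^ Dn + r : ℕ)) * (2:ℝ) ^ s m := by
        intro r
        rw [hxdef, haw]
        push_cast
        rw [h2p, hu']
        ring
      have hKmem : ∀ r : ℕ, r < 2 ^ Dn → K r ⊆ Istar s k m := by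
        intro r hr z hz
        have htr : u * 2 ^ Dn + r < 2 ^ (s (m+1) - s m - 1).toNat := by
          have := htEn r hr; rwa [hEdef] at this
        have hsc := sub_comp s k hs hm ha htr
        simp only [hKdef] at hz
        rw [hend r] at hz
        rw [Istar]
        exact Set.mem_biUnion hsc.1 hz
      have hKsubJ : ∀ r : ℕ, r < 2 ^ Dn →
          K r ⊆ Set.Icc ((j:ℝ) * 2 ^ p) (((j:ℝ) + 1) * 2 ^ p) := by
        intro r hr z hz
        simp only [hKdef, Set.mem_Icc] at hz
        have hrr : (r:ℝ) + 1 ≤ 2 ^ Dn := by exact_mod_cast Nat.succ_le_of_lt hr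
        have hX := two_zpow_pos (s m)
        have hprod : ((r:ℝ) + 1) * 2 ^ s m ≤ 2 ^ Dn * 2 ^ s m :=
          mul_le_mul_of_nonneg_right hrr (le_of_lt hX)
        constructor
        · have h0 : (0:ℝ) ≤ 2 * r * 2 ^ s m := by positivity
          linarith [hz.1, h0, hxdef.le, hxdef.ge]
        · linarith [hz.2, hprod, hX, hxdef.le, hxdef.ge, h2p.le, h2p.ge]
      have hKdisj : ∀ r r' : ℕ, r < r' → Disjoint (K r) (K r') := by
        intro r r' hlt
        simp only [hKdef]
        apply Icc_disj
        have hc : (r:ℝ) + 1 ≤ r' := by exact_mod_cast hlt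
        have hX := two_zpow_pos (s m)
        have hprod : ((r:ℝ) + 1) * 2 ^ s m ≤ (r':ℝ) * 2 ^ s m :=
          mul_le_mul_of_nonneg_right hc (le_of_lt hX)
        linarith [hprod, hX]
      have hx'' : (j:ℝ) * 2 ^ p = a + 2 * ((u:ℝ) * 2 ^ Dn) * 2 ^ s m := by
        rw [haw, h2p, hu']; ring
      have hcover : Set.Icc ((j:ℝ) * 2 ^ p) (((j:ℝ) + 1) * 2 ^ p) ∩ Istar s k m ⊆
          (⋃ r ∈ Finset.range (2 ^ Dn), K r) ∪ {((j:ℝ) + 1) * 2 ^ p} := by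
        rintro z ⟨hzJ, hzI⟩
        rw [Istar] at hzI
        simp only [Set.mem_iUnion] at hzI
        obtain ⟨b, hb, hzb⟩ := hzI
        rw [leftEnds_succ s k m hm] at hb
        simp only [Set.mem_iUnion, Set.mem_image, Set.mem_setOf_eq] at hb
        obtain ⟨a', ha', t', ht', rfl⟩ := hb
        by_cases haa : a' = a
        · subst haa
          obtain ⟨U, hU⟩ : ∃ U, u * 2 ^ Dn = U := ⟨_, rfl⟩
          rcases lt_or_ge t' U with hlo | hge1
          · exfalso
            have ht'le : (t':ℝ) + 1 ≤ (u:ℝ) * 2 ^ Dn := by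
              have : (t':ℝ) + 1 ≤ U := by exact_mod_cast hlo
              rw [← hU] at this; push_cast at this; linarith
            have hX := two_zpow_pos (s m)
            have hm0 : ((t':ℝ) + 1) * 2 ^ s m ≤ (u:ℝ) * 2 ^ Dn * 2 ^ s m :=
              mul_le_mul_of_nonneg_right ht'le (le_of_lt hX)
            linarith [hzb.2, hzJ.1, hx''.le, hx''.ge, hm0, hX]
          · rcases lt_or_ge t' (U + 2 ^ Dn) with hmid | hhi
            · left
              simp only [Set.mem_iUnion, Finset.mem_range]
              refine ⟨t' - U, by omega, ?_⟩
              simp only [hKdef]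
              have heq : u * 2 ^ Dn + (t' - U) = t' := by omega
              rw [hend (t' - U), heq]
              exact hzb
            · right
              have hhi' : ((u:ℝ) + 1) * 2 ^ Dn ≤ t' := by
                have h4 : U + 2 ^ Dn ≤ t' := hhi
                have : ((U:ℝ) + 2 ^ Dn) ≤ t' := by exact_mod_cast h4
                rw [← hU] at this; push_cast at this; linarith
              have hzge : ((j:ℝ) + 1) * 2 ^ p ≤ z := by
                have h5 := hzb.1
                have hX := two_zpow_pos (s m)
                have hm1 : ((u:ℝ) + 1) * 2 ^ Dn * 2 ^ s m ≤ (t':ℝ) * 2 ^ s m :=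
                  mul_le_mul_of_nonneg_right hhi' (le_of_lt hX)
                linarith [h5, hm1, hx''.le, hx''.ge, h2p.le, h2p.ge]
              have : z = ((j:ℝ) + 1) * 2 ^ p := le_antisymm hzJ.2 hzge
              simp [this]
        · exfalso
          have hdisj := comp_disjoint s k hs (i := k - (m+1)) (by omega) ha' ha haa
          rw [show k - (k - (m+1)) = m + 1 by omega] at hdisj
          have htr' : t' < 2 ^ (s (m+1) - s m - 1).toNat := ht'
          have hz1 : z ∈ Set.Icc a' (a' + (2:ℝ) ^ s (m+1)) :=
            (sub_comp s k hs hm ha' htr').2 hzb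
          have hz2 : z ∈ Set.Icc a (a + (2:ℝ) ^ s (m+1)) := hJsub hzJ
          exact Set.disjoint_left.mp hdisj hz1 hz2
      -- volume of each piece, via the induction hypothesis
      have hKvol : ∀ r : ℕ, r < 2 ^ Dn →
          volume (K r ∩ Istar s k 0) = ENNReal.ofReal ((2:ℝ) ^ s m) / 2 ^ m := by
        intro r hr
        set jr : ℤ := j * 2 ^ (p - s m).toNat + 2 * r with hjrdef
        have hKr : K r = Set.Icc ((jr:ℝ) * (2:ℝ) ^ s m) (((jr:ℝ) + 1) * (2:ℝ) ^ s m) := by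
          simp only [hKdef]
          have he1 : x + 2 * r * (2:ℝ) ^ s m = (jr:ℝ) * (2:ℝ) ^ s m := by
            rw [hxdef, hjrdef, two_zpow_split (s m) p (le_of_lt hp)]
            push_cast; ring
          rw [he1]
          congr 1
          ring
        rw [hKr]
        refine ih (by omega) (s m) jr (hKr ▸ hKmem r hr) (le_refl _) (fun h1 => ?_)
        have := hs (m - 1) (by omega)
        rwa [show m - 1 + 1 = m by omega] at this
      -- put everything together
      have hIncl1 : (⋃ r ∈ Finset.range (2 ^ Dn), (K r ∩ Istar s k 0)) ⊆
          Set.Icc ((j:ℝ) * 2 ^ p) (((j:ℝ) + 1) * 2 ^ p) ∩ Istar s k 0 := by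
        intro z hz
        simp only [Set.mem_iUnion, Finset.mem_range] at hz
        obtain ⟨r, hr, hz1, hz2⟩ := hz
        exact ⟨hKsubJ r hr hz1, hz2⟩
      have hIncl2 : Set.Icc ((j:ℝ) * 2 ^ p) (((j:ℝ) + 1) * 2 ^ p) ∩ Istar s k 0 ⊆
          (⋃ r ∈ Finset.range (2 ^ Dn), (K r ∩ Istar s k 0)) ∪ {((j:ℝ) + 1) * 2 ^ p} := by
        rintro z ⟨hz1, hz2⟩
        have hzm : z ∈ Istar s k m := Istar_zero_subset s k hs (by omega) hz2
        rcases hcover ⟨hz1, hzm⟩ with h | h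
        · left
          simp only [Set.mem_iUnion, Finset.mem_range] at h ⊢
          obtain ⟨r, hr, hzr⟩ := h
          exact ⟨r, hr, hzr, hz2⟩
        · right; exact h
      have hvol_eq : volume (Set.Icc ((j:ℝ) * 2 ^ p) (((j:ℝ) + 1) * 2 ^ p) ∩ Istar s k 0)
          = volume (⋃ r ∈ Finset.range (2 ^ Dn), (K r ∩ Istar s k 0)) := by
        apply le_antisymm
        · calc volume (Set.Icc ((j:ℝ) * 2 ^ p) (((j:ℝ) + 1) * 2 ^ p) ∩ Istar s k 0)
              ≤ volume ((⋃ r ∈ Finset.range (2 ^ Dn), (K r ∩ Istar s k 0))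
                  ∪ {((j:ℝ) + 1) * 2 ^ p}) := measure_mono hIncl2
            _ ≤ volume (⋃ r ∈ Finset.range (2 ^ Dn), (K r ∩ Istar s k 0))
                  + volume ({((j:ℝ) + 1) * 2 ^ p} : Set ℝ) := measure_union_le _ _
            _ = volume (⋃ r ∈ Finset.range (2 ^ Dn), (K r ∩ Istar s k 0)) := by
                  rw [measure_singleton, add_zero]
        · exact measure_mono hIncl1
      have hsum : volume (⋃ r ∈ Finset.range (2 ^ Dn), (K r ∩ Istar s k 0))
          = ∑ r ∈ Finset.range (2 ^ Dn), volume (K r ∩ Istar s k 0) := by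
        apply measure_biUnion_finset
        · intro r hr r' hr' hne
          rcases lt_or_gt_of_ne hne with h | h
          · exact (hKdisj r r' h).mono Set.inter_subset_left Set.inter_subset_left
          · exact ((hKdisj r' r h).symm).mono Set.inter_subset_left Set.inter_subset_left
        · intro r _
          exact (measurableSet_Icc).inter (Istar_measurable s k 0)
      rw [hvol_eq, hsum,
        Finset.sum_congr rfl (fun r hr => hKvol r (Finset.mem_range.mp hr)),
        Finset.sum_const, Finset.card_range, nsmul_eq_mul]
      -- final arithmetic in ℝ≥0∞
      push_cast
      have hof : ENNReal.ofReal ((2:ℝ) ^ p)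
          = 2 ^ Dn * 2 * ENNReal.ofReal ((2:ℝ) ^ s m) := by
        rw [h2p, ENNReal.ofReal_mul (by positivity), ENNReal.ofReal_mul (by positivity)]
        norm_num [ENNReal.ofReal_pow]
      rw [hof]
      have h2m : ((2:ℝ≥0∞)) ^ m ≠ 0 := pow_ne_zero _ two_ne_zero
      have h2m' : ((2:ℝ≥0∞)) ^ m ≠ ⊤ := ENNReal.pow_ne_top ENNReal.ofNat_ne_top
      rw [ENNReal.eq_div_iff (pow_ne_zero _ two_ne_zero) (ENNReal.pow_ne_top ENNReal.ofNat_ne_top),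
        pow_succ]
      calc (2:ℝ≥0∞) ^ m * 2 * (2 ^ Dn * (ENNReal.ofReal ((2:ℝ) ^ s m) / 2 ^ m))
          = 2 ^ Dn * 2 * (ENNReal.ofReal ((2:ℝ) ^ s m) / 2 ^ m * 2 ^ m) := by ring
        _ = 2 ^ Dn * 2 * ENNReal.ofReal ((2:ℝ) ^ s m) := by
            rw [ENNReal.div_mul_cancel h2m h2m']

include hs in
lemma part2 (m : ℕ) (h1 : 1 ≤ m) (hk : m ≤ k) :
    volume (Istar s k m ∩ Istar s k 0) = volume (Istar s k m) / 2 ^ m := by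
  classical
  set F := (leftEnds_finite s k (k - m)).toFinset with hF
  have hmem : ∀ a : ℝ, a ∈ F ↔ a ∈ leftEnds s k (k - m) :=
    fun a => (leftEnds_finite s k (k - m)).mem_toFinset
  have hI : Istar s k m = ⋃ a ∈ F, Set.Icc a (a + (2:ℝ) ^ s m) := by
    rw [Istar]; ext z; simp only [Set.mem_iUnion]
    constructor
    · rintro ⟨a, ha, hz⟩; exact ⟨a, (hmem a).mpr ha, hz⟩
    · rintro ⟨a, ha, hz⟩; exact ⟨a, (hmem a).mp ha, hz⟩
  have hdisjF : ∀ a ∈ F, ∀ b ∈ F, a ≠ b →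
      Disjoint (Set.Icc a (a + (2:ℝ) ^ s m)) (Set.Icc b (b + (2:ℝ) ^ s m)) := by
    intro a ha b hb hab
    have := comp_disjoint s k hs (i := k - m) (by omega) ((hmem a).mp ha) ((hmem b).mp hb) hab
    rwa [show k - (k - m) = m by omega] at this
  have hvol1 : volume (Istar s k m ∩ Istar s k 0)
      = ∑ a ∈ F, volume (Set.Icc a (a + (2:ℝ) ^ s m) ∩ Istar s k 0) := by
    rw [hI, Set.iUnion₂_inter]
    apply measure_biUnion_finset
    · intro a ha b hb hab
      exact (hdisjF a ha b hb hab).mono Set.inter_subset_left Set.inter_subset_left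
    · intro a _; exact measurableSet_Icc.inter (Istar_measurable s k 0)
  have hvol2 : volume (Istar s k m) = ∑ a ∈ F, volume (Set.Icc a (a + (2:ℝ) ^ s m)) := by
    rw [hI]
    exact measure_biUnion_finset (fun a ha b hb hab => hdisjF a ha b hb hab)
      (fun a _ => measurableSet_Icc)
  have hpervol : ∀ a ∈ F, volume (Set.Icc a (a + (2:ℝ) ^ s m) ∩ Istar s k 0)
      = ENNReal.ofReal ((2:ℝ) ^ s m) / 2 ^ m := by
    intro a ha
    obtain ⟨n, han⟩ := by
      have := leftEnds_mult s k hs (k - m) (by omega) a ((hmem a).mp ha)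
      rwa [show k - (k - m) = m by omega] at this
    have he1 : a = (((2 * n : ℤ)):ℝ) * (2:ℝ) ^ s m := by
      rw [han, zpow_add₀ (two_ne_zero : (2:ℝ) ≠ 0), zpow_one]; push_cast; ring
    have he2 : a + (2:ℝ) ^ s m = ((((2 * n : ℤ)):ℝ) + 1) * (2:ℝ) ^ s m := by
      rw [he1]; ring
    have hCsub : Set.Icc (((2 * n : ℤ):ℝ) * (2:ℝ) ^ s m)
        ((((2 * n : ℤ):ℝ) + 1) * (2:ℝ) ^ s m) ⊆ Istar s k m := by
      rw [← he1, ← he2, Istar]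
      exact Set.subset_biUnion_of_mem (u := fun a => Set.Icc a (a + (2:ℝ) ^ s m)) ((hmem a).mp ha)
    have hres := main_vol s k hs m hk (s m) (2 * n) hCsub (le_refl _) (fun _ => by
      have := hs (m - 1) (by omega); rwa [show m - 1 + 1 = m by omega] at this)
    rw [he2, he1]
    exact hres
  have hvolC : ∀ a ∈ F, volume (Set.Icc a (a + (2:ℝ) ^ s m))
      = ENNReal.ofReal ((2:ℝ) ^ s m) := by
    intro a _
    rw [Real.volume_Icc]
    congr 1; ring
  rw [hvol1, hvol2, Finset.sum_congr rfl hpervol, Finset.sum_congr rfl hvolC,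
    Finset.sum_const, Finset.sum_const, nsmul_eq_mul, nsmul_eq_mul, mul_div_assoc]
end

/-- Lemma 2, part 3): every dyadic interval `J` contained in `I*_m` whose length lies in
`(2^{s_{m-1}}, 2^{s_m}]` satisfies `|J ∩ I*_0| / |J| = 1/2^m`, and in particular
`|I*_m ∩ I*_0| / |I*_m| = 1/2^m`. -/
theorem statement4 (k : ℕ) (s : ℕ → ℤ) (hs : ∀ m, m < k → s m < s (m + 1)) :
    (∀ m, 1 ≤ m → m ≤ k → ∀ j p : ℤ,
      Set.Icc ((j : ℝ) * (2:ℝ) ^ p) (((j : ℝ) + 1) * (2:ℝ) ^ p) ⊆ Istar s k m →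
      (2:ℝ) ^ p ∈ Set.Ioc ((2:ℝ) ^ s (m - 1)) ((2:ℝ) ^ s m) →
      volume (Set.Icc ((j : ℝ) * (2:ℝ) ^ p) (((j : ℝ) + 1) * (2:ℝ) ^ p) ∩ Istar s k 0)
        = ENNReal.ofReal ((2:ℝ) ^ p) / 2 ^ m) ∧
    (∀ m, 1 ≤ m → m ≤ k →
      volume (Istar s k m ∩ Istar s k 0) = volume (Istar s k m) / 2 ^ m) := by
  constructor
  · intro m h1 hk j p hsub hIoc
    have hlt : s (m - 1) < p := (zpow_lt_zpow_iff_right₀ one_lt_two).mp hIoc.1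
    have hle : p ≤ s m := (zpow_le_zpow_iff_right₀ one_lt_two).mp hIoc.2
    exact main_vol s k hs m hk p j hsub hle (fun _ => hlt)
  · exact fun m h1 hk => part2 s k hs m h1 hk

end
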